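/- arXiv:0912.2026 — 8 statements merged into one kernel-verified Lean document; each statement's English description precedes it below -/
import Mathlib

section
/- Let f and g be nonnegative measurable functions on [0,1] with f integrable, such that log(f/g) is essentially bounded on [0,1]. Then Δ(f;g) ≤ (1/2) · exp(‖log(f/g)‖_∞) · ∫₀¹ f · (log(f/g))² dμ. -/
/-!
Write `L = log (f / g)`. Almost everywhere `g = f e^{-L}`, so the integrand of `Δ(f;g)` is
`f (e^{-L} - 1 + L) ≥ 0`. The elementary bound `e^t - 1 - t ≤ t²/2 · e^{|t|}` at `t = -L`,
together with `|L| ≤ ‖L‖_∞` a.e., bounds it by `½ e^{‖L‖_∞} f L²`, which is integrable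
because `f ∈ L¹` and `L ∈ L^∞`.
-/

open MeasureTheory

/-- The generalized Kullback–Leibler divergence
`Δ(f;g) = ∫₀¹ (f log(f/g) − f + g) dμ`, `μ` the Lebesgue measure on `[0,1]`. -/
noncomputable def KLdiv (f g : ℝ → ℝ) : ℝ :=
  ∫ x in Set.Icc (0:ℝ) 1, (f x * Real.log (f x / g x) - f x + g x)

namespace Real

theorem exp_sub_one_sub_le_sq_div_two_mul_exp {t : ℝ} (ht : 0 ≤ t) :
    exp t - 1 - t ≤ t ^ 2 / 2 * exp t := by
  let h : ℝ → ℝ := fun s => s ^ 2 / 2 * exp s - exp s + 1 + s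
  have h_deriv (s : ℝ) :
      HasDerivAt h (s ^ 2 / 2 * exp s + (s * exp s - exp s + 1)) s := by
    refine (((((hasDerivAt_pow 2 s).div_const 2).mul (hasDerivAt_exp s)).sub
      (hasDerivAt_exp s)).add_const 1).add (hasDerivAt_id' s) |>.congr_deriv ?_
    push_cast
    ring
  have h_mono : MonotoneOn h (Set.Ici 0) := by
    refine monotoneOn_of_hasDerivWithinAt_nonneg (convex_Ici 0)
      (fun s _ => (h_deriv s).continuousAt.continuousWithinAt)
      (fun s _ => (h_deriv s).hasDerivWithinAt) fun s _ => ?_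
    have h_tangent : (1 - s) * exp s ≤ 1 := by
      simpa [← exp_add] using
        mul_le_mul_of_nonneg_right (by linarith [add_one_le_exp (-s)] : 1 - s ≤ exp (-s))
          (exp_pos s).le
    nlinarith [mul_nonneg (div_nonneg (sq_nonneg s) zero_le_two) (exp_pos s).le]
  have := h_mono Set.self_mem_Ici (Set.mem_Ici.mpr ht) ht
  norm_num [h] at this
  linarith

theorem exp_sub_one_sub_le_sq_div_two_mul_exp_abs (t : ℝ) :
    exp t - 1 - t ≤ t ^ 2 / 2 * exp |t| := by
  rcases le_total 0 t with ht | ht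
  · simpa [abs_of_nonneg ht] using exp_sub_one_sub_le_sq_div_two_mul_exp ht
  · -- for `t ≤ 0` the left side only grows under `t ↦ -t`, as `-t ≤ sinh (-t)`
    have h_sinh : -t ≤ sinh (-t) := self_le_sinh_iff.mpr (neg_nonneg.mpr ht)
    have h_reflect := exp_sub_one_sub_le_sq_div_two_mul_exp (neg_nonneg.mpr ht)
    rw [sinh_eq, neg_neg] at h_sinh
    rw [abs_of_nonpos ht]
    nlinarith

theorem mul_log_div_sub_add_eq {x y : ℝ} (hx : 0 < x) (hy : 0 < y) :
    x * log (x / y) - x + y = x * (exp (-log (x / y)) - 1 - -log (x / y)) := by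
  rw [exp_neg, exp_log (by positivity), inv_div]
  field_simp
  ring

theorem mul_log_div_sub_add_nonneg {x y : ℝ} (hx : 0 < x) (hy : 0 < y) :
    0 ≤ x * log (x / y) - x + y := by
  rw [mul_log_div_sub_add_eq hx hy]
  nlinarith [add_one_le_exp (-log (x / y))]

theorem mul_log_div_sub_add_le {x y : ℝ} (hx : 0 < x) (hy : 0 < y) :
    x * log (x / y) - x + y ≤ exp |log (x / y)| / 2 * (x * log (x / y) ^ 2) := by
  have := exp_sub_one_sub_le_sq_div_two_mul_exp_abs (-log (x / y))
  rw [neg_sq, abs_neg] at this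
  rw [mul_log_div_sub_add_eq hx hy]
  nlinarith

end Real

open Real

theorem MeasureTheory.MemLp.ae_norm_le_toReal_eLpNorm_top {α E : Type*} [MeasurableSpace α]
    {μ : Measure α} [NormedAddCommGroup E] {f : α → E} (hf : MemLp f ⊤ μ) :
    ∀ᵐ x ∂μ, ‖f x‖ ≤ (eLpNorm f ⊤ μ).toReal := by
  filter_upwards [enorm_ae_le_eLpNormEssSup f μ] with x hx
  rw [← eLpNorm_exponent_top, ← ofReal_norm] at hx
  exact (ENNReal.ofReal_le_iff_le_toReal hf.eLpNorm_ne_top).mp hx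

theorem integral_mul_log_div_sub_add_le {α : Type*} [MeasurableSpace α] {μ : Measure α}
    {f g : α → ℝ} (hf_pos : ∀ᵐ x ∂μ, 0 < f x) (hg_pos : ∀ᵐ x ∂μ, 0 < g x)
    (hf_int : Integrable f μ) (h_log : MemLp (fun x => log (f x / g x)) ⊤ μ) :
    ∫ x, (f x * log (f x / g x) - f x + g x) ∂μ ≤
      1 / 2 * exp (eLpNorm (fun x => log (f x / g x)) ⊤ μ).toReal *
        ∫ x, f x * log (f x / g x) ^ 2 ∂μ := by
  set M := (eLpNorm (fun x => log (f x / g x)) ⊤ μ).toReal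
  have h_bound := h_log.ae_norm_le_toReal_eLpNorm_top
  have h_int : Integrable (fun x => f x * log (f x / g x) ^ 2) μ :=
    hf_int.mul_bdd (h_log.1.pow 2) <| h_bound.mono fun x hx => by
      simpa [sq_abs] using pow_le_pow_left₀ (norm_nonneg _) hx 2
  rw [← integral_const_mul]
  -- the left integrand is nonnegative, so its integrability never has to be shown
  refine integral_mono_of_nonneg ?_ (h_int.const_mul _) ?_
  · filter_upwards [hf_pos, hg_pos] with x hfx hgx
    exact mul_log_div_sub_add_nonneg hfx hgx
  · filter_upwards [hf_pos, hg_pos, h_bound] with x hfx hgx hx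
    calc f x * log (f x / g x) - f x + g x
        ≤ exp |log (f x / g x)| / 2 * (f x * log (f x / g x) ^ 2) :=
          mul_log_div_sub_add_le hfx hgx
      _ ≤ exp M / 2 * (f x * log (f x / g x) ^ 2) := by
        have hfx_nonneg := hfx.le
        gcongr
        exact hx
      _ = 1 / 2 * exp M * (f x * log (f x / g x) ^ 2) := by ring

theorem stmt_1_general (f g : ℝ → ℝ)
    (hfpos : ∀ᵐ x ∂(volume.restrict (Set.Icc (0:ℝ) 1)), 0 < f x)
    (hgpos : ∀ᵐ x ∂(volume.restrict (Set.Icc (0:ℝ) 1)), 0 < g x)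
    (hfint : IntegrableOn f (Set.Icc (0:ℝ) 1))
    (hbdd : MemLp (fun x => Real.log (f x / g x)) ⊤ (volume.restrict (Set.Icc (0:ℝ) 1))) :
    KLdiv f g ≤ (1/2) *
        Real.exp ((eLpNorm (fun x => Real.log (f x / g x)) ⊤
          (volume.restrict (Set.Icc (0:ℝ) 1))).toReal) *
        ∫ x in Set.Icc (0:ℝ) 1, f x * (Real.log (f x / g x))^2 :=
  integral_mul_log_div_sub_add_le hfpos hgpos hfint hbdd

/-- if `f, g` are nonnegative measurable functions on `[0,1]`
(positive a.e., so that the ratio `f/g` makes sense), `f` is integrable and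
`log(f/g)` is essentially bounded on `[0,1]`, then
`Δ(f;g) ≤ (1/2) exp(‖log(f/g)‖_∞) ∫₀¹ f (log(f/g))² dμ`. -/
theorem stmt_1 (f g : ℝ → ℝ) (hf : Measurable f) (hg : Measurable g)
    (hfnn : ∀ x, 0 ≤ f x) (hgnn : ∀ x, 0 ≤ g x)
    (hfpos : ∀ᵐ x ∂(volume.restrict (Set.Icc (0:ℝ) 1)), 0 < f x)
    (hgpos : ∀ᵐ x ∂(volume.restrict (Set.Icc (0:ℝ) 1)), 0 < g x)
    (hfint : IntegrableOn f (Set.Icc (0:ℝ) 1))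
    (hbdd : MemLp (fun x => Real.log (f x / g x)) ⊤ (volume.restrict (Set.Icc (0:ℝ) 1))) :
    KLdiv f g ≤ (1/2) *
        Real.exp ((eLpNorm (fun x => Real.log (f x / g x)) ⊤
          (volume.restrict (Set.Icc (0:ℝ) 1))).toReal) *
        ∫ x in Set.Icc (0:ℝ) 1, f x * (Real.log (f x / g x))^2 :=
  stmt_1_general f g hfpos hgpos hfint hbdd
end

section
/- Let f and g be measurable functions on [0,1] such that 0 < f ≤ M₁ almost everywhere for a constant M₁ > 0, g is positive almost everywhere, and log(f/g) is essentially bounded. Then ∫₀¹ (f − g)² dμ ≤ M₁ · exp(2‖log(f/g)‖_∞) · ∫₀¹ f · (log(f/g))² dμ. -/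
/-!
Writing `t = log (f / g)`, one has `g = f e^{-t}`, hence pointwise
`|f - g| = f |e^{-t} - 1| ≤ f |t| e^{|t|} ≤ f |t| e^{‖t‖_∞}`.
Squaring and using `f² ≤ M₁ f` bounds the integrand of the left side by
`M₁ e^{2‖t‖_∞} f t²`, which is integrable since `f` and `t` are essentially bounded.
-/

open MeasureTheory

namespace Real

lemma abs_exp_sub_one_le_abs_mul_exp (x : ℝ) : |exp x - 1| ≤ |x| * exp |x| := by
  simpa [← Complex.ofReal_exp, ← Complex.ofReal_one, ← Complex.ofReal_sub, Complex.norm_real] using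
    Complex.norm_exp_sub_sum_le_norm_mul_exp (x : ℂ) 1

lemma abs_sub_le_mul_abs_log_div_mul_exp {a b : ℝ} (ha : 0 < a) (hb : 0 < b) :
    |a - b| ≤ a * |log (a / b)| * exp |log (a / b)| := by
  set t := log (a / b)
  have hb_eq : b = a * exp (-t) := by
    rw [← log_inv, inv_div, exp_log (div_pos hb ha)]
    field_simp
  calc |a - b| = a * |exp (-t) - 1| := by
        rw [hb_eq, ← abs_of_pos ha, ← abs_mul, abs_of_pos ha, abs_sub_comm]; ring_nf
    _ ≤ a * (|t| * exp |t|) := by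
        gcongr
        simpa only [abs_neg] using abs_exp_sub_one_le_abs_mul_exp (-t)
    _ = a * |t| * exp |t| := by ring

lemma sq_sub_le_exp_mul_sq_mul_sq_log_div {a b L : ℝ} (ha : 0 < a) (hb : 0 < b)
    (hL : |log (a / b)| ≤ L) :
    (a - b) ^ 2 ≤ exp (2 * L) * a ^ 2 * log (a / b) ^ 2 := by
  set t := log (a / b)
  calc (a - b) ^ 2 = |a - b| ^ 2 := (sq_abs _).symm
    _ ≤ (a * |t| * exp |t|) ^ 2 := by
        gcongr; exact abs_sub_le_mul_abs_log_div_mul_exp ha hb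
    _ = exp (2 * |t|) * a ^ 2 * t ^ 2 := by
        rw [mul_pow, mul_pow, sq_abs, ← exp_nat_mul]; push_cast; ring
    _ ≤ exp (2 * L) * a ^ 2 * t ^ 2 := by gcongr

end Real

theorem MeasureTheory.integral_sq_sub_le_of_memLp_log_div {α : Type*} [MeasurableSpace α]
    {μ : Measure α} [IsFiniteMeasure μ] {f g : α → ℝ} {M : ℝ} (hf : AEStronglyMeasurable f μ)
    (hfpos : ∀ᵐ x ∂μ, 0 < f x ∧ f x ≤ M) (hgpos : ∀ᵐ x ∂μ, 0 < g x)
    (hlog : MemLp (fun x => Real.log (f x / g x)) ⊤ μ) :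
    ∫ x, (f x - g x) ^ 2 ∂μ ≤
      M * Real.exp (2 * lpNorm (fun x => Real.log (f x / g x)) ⊤ μ) *
        ∫ x, f x * Real.log (f x / g x) ^ 2 ∂μ := by
  set L := lpNorm (fun x => Real.log (f x / g x)) ⊤ μ
  have hL : ∀ᵐ x ∂μ, |Real.log (f x / g x)| ≤ L := ae_le_lpNorm_exponent_top hlog
  have hint : Integrable (fun x => f x * Real.log (f x / g x) ^ 2) μ := by
    refine .of_bound (hf.mul (hlog.1.pow 2)) (M * L ^ 2) ?_
    filter_upwards [hfpos, hL] with x ⟨hf0, hfM⟩ hx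
    rw [norm_mul, norm_pow, Real.norm_eq_abs, Real.norm_eq_abs, abs_of_pos hf0]
    gcongr
    linarith
  rw [← integral_const_mul]
  refine integral_mono_of_nonneg (.of_forall fun x => sq_nonneg _) (hint.const_mul _) ?_
  filter_upwards [hfpos, hgpos, hL] with x ⟨hf0, hfM⟩ hg0 hx
  calc (f x - g x) ^ 2 ≤ Real.exp (2 * L) * f x ^ 2 * Real.log (f x / g x) ^ 2 :=
        Real.sq_sub_le_exp_mul_sq_mul_sq_log_div hf0 hg0 hx
    _ = Real.exp (2 * L) * Real.log (f x / g x) ^ 2 * (f x * f x) := by ring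
    _ ≤ Real.exp (2 * L) * Real.log (f x / g x) ^ 2 * (M * f x) := by gcongr
    _ = M * Real.exp (2 * L) * (f x * Real.log (f x / g x) ^ 2) := by ring

theorem stmt_2_general (f g : ℝ → ℝ) (hf : Measurable f)
    (M₁ : ℝ)
    (hfpos : ∀ᵐ x ∂(volume.restrict (Set.Icc (0:ℝ) 1)), 0 < f x ∧ f x ≤ M₁)
    (hgpos : ∀ᵐ x ∂(volume.restrict (Set.Icc (0:ℝ) 1)), 0 < g x)
    (hbdd : MemLp (fun x => Real.log (f x / g x)) ⊤ (volume.restrict (Set.Icc (0:ℝ) 1))) :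
    ∫ x in Set.Icc (0:ℝ) 1, (f x - g x)^2 ≤
      M₁ * Real.exp (2 * (eLpNorm (fun x => Real.log (f x / g x)) ⊤
          (volume.restrict (Set.Icc (0:ℝ) 1))).toReal) *
        ∫ x in Set.Icc (0:ℝ) 1, f x * (Real.log (f x / g x))^2 := by
  rw [toReal_eLpNorm hbdd.1]
  exact integral_sq_sub_le_of_memLp_log_div hf.aestronglyMeasurable hfpos hgpos hbdd

/-- if `0 < f ≤ M₁` a.e. on `[0,1]`, `g > 0` a.e. and `log(f/g)` is
essentially bounded, then
`∫₀¹ (f − g)² dμ ≤ M₁ exp(2‖log(f/g)‖_∞) ∫₀¹ f (log(f/g))² dμ`. -/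
theorem stmt_2 (f g : ℝ → ℝ) (hf : Measurable f) (hg : Measurable g)
    (M₁ : ℝ) (hM₁ : 0 < M₁)
    (hfpos : ∀ᵐ x ∂(volume.restrict (Set.Icc (0:ℝ) 1)), 0 < f x ∧ f x ≤ M₁)
    (hgpos : ∀ᵐ x ∂(volume.restrict (Set.Icc (0:ℝ) 1)), 0 < g x)
    (hbdd : MemLp (fun x => Real.log (f x / g x)) ⊤ (volume.restrict (Set.Icc (0:ℝ) 1))) :
    ∫ x in Set.Icc (0:ℝ) 1, (f x - g x)^2 ≤
      M₁ * Real.exp (2 * (eLpNorm (fun x => Real.log (f x / g x)) ⊤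
          (volume.restrict (Set.Icc (0:ℝ) 1))).toReal) *
        ∫ x in Set.Icc (0:ℝ) 1, f x * (Real.log (f x / g x))^2 :=
  stmt_2_general f g hf M₁ hfpos hgpos hbdd
end

section
/- Let ψ₁,…,ψ_m be bounded measurable functions on [0,1] and let β ∈ ℝ^m. Suppose there exists θ(β) ∈ ℝ^m such that ∫₀¹ f_{θ(β)} ψ_i dμ = β_i for all i = 1,…,m. Then for any nonnegative integrable function f on [0,1] with f·log f integrable and ∫₀¹ f ψ_i dμ = β_i for all i, and for every θ ∈ ℝ^m, the Pythagorean-like identity Δ(f; f_θ) = Δ(f; f_{θ(β)}) + Δ(f_{θ(β)}; f_θ) holds. -/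
open MeasureTheory

/-- The exponential family member `f_θ = exp(Σ_{i} θ_i ψ_i)`. -/
noncomputable def expFam {m : ℕ} (ψ : Fin m → ℝ → ℝ) (θ : Fin m → ℝ) : ℝ → ℝ :=
  fun x => Real.exp (∑ i, θ i * ψ i x)

/-! For integrable `f` with `f log f` integrable,
`Δ(f; f_θ) = ∫ f log f − Σ θᵢ ∫ f ψᵢ − ∫ f + ∫ f_θ`, since `log f_θ = Σ θᵢ ψᵢ` is bounded.
So `Δ(f; f_θ)` sees `f` only through `∫ f log f`, its mass and its moments `∫ f ψᵢ`. When `f`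
and `f_{θ(β)}` share the moments `β`, the same expansion gives
`∫ f_{θ(β)} log f_{θ(β)} = Σ θ(β)ᵢ βᵢ`, and the three expansions in the identity cancel. -/

namespace expFam

variable {m : ℕ} {ψ : Fin m → ℝ → ℝ}

theorem log_apply (θ : Fin m → ℝ) (x : ℝ) :
    Real.log (expFam ψ θ x) = ∑ i, θ i * ψ i x :=
  Real.log_exp _

theorem pos (θ : Fin m → ℝ) (x : ℝ) : 0 < expFam ψ θ x :=
  Real.exp_pos _

theorem measurable (hψmeas : ∀ i, Measurable (ψ i)) (θ : Fin m → ℝ) :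
    Measurable (expFam ψ θ) :=
  Real.measurable_exp.comp (Finset.measurable_sum _ fun i _ => (hψmeas i).const_mul _)

theorem exists_abs_log_le (hψbdd : ∀ i, ∃ C, ∀ x, |ψ i x| ≤ C) (θ : Fin m → ℝ) :
    ∃ B, ∀ x, |Real.log (expFam ψ θ x)| ≤ B := by
  choose C hC using hψbdd
  refine ⟨∑ i, |θ i| * C i, fun x => ?_⟩
  rw [log_apply]
  calc |∑ i, θ i * ψ i x| ≤ ∑ i, |θ i * ψ i x| := Finset.abs_sum_le_sum_abs _ _
    _ ≤ ∑ i, |θ i| * C i := Finset.sum_le_sum fun i _ => by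
        rw [abs_mul]
        exact mul_le_mul_of_nonneg_left (hC i x) (abs_nonneg _)

variable {μ : Measure ℝ}

theorem integrable [IsFiniteMeasure μ] (hψmeas : ∀ i, Measurable (ψ i))
    (hψbdd : ∀ i, ∃ C, ∀ x, |ψ i x| ≤ C) (θ : Fin m → ℝ) :
    Integrable (expFam ψ θ) μ := by
  obtain ⟨B, hB⟩ := exists_abs_log_le hψbdd θ
  refine .of_bound (measurable hψmeas θ).aestronglyMeasurable (Real.exp B)
    (ae_of_all _ fun x => ?_)
  have hpos := pos (ψ := ψ) θ x
  rw [Real.norm_eq_abs, abs_of_pos hpos, ← Real.exp_log hpos]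
  exact Real.exp_le_exp.2 ((le_abs_self _).trans (hB x))

theorem integrable_mul_log {f : ℝ → ℝ} (hψmeas : ∀ i, Measurable (ψ i))
    (hψbdd : ∀ i, ∃ C, ∀ x, |ψ i x| ≤ C) (hf : Integrable f μ) (θ : Fin m → ℝ) :
    Integrable (fun x => f x * Real.log (expFam ψ θ x)) μ := by
  obtain ⟨B, hB⟩ := exists_abs_log_le hψbdd θ
  exact hf.mul_bdd (Real.measurable_log.comp (measurable hψmeas θ)).aestronglyMeasurable
    (ae_of_all _ hB)

theorem integral_mul_log {f : ℝ → ℝ} (hψmeas : ∀ i, Measurable (ψ i))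
    (hψbdd : ∀ i, ∃ C, ∀ x, |ψ i x| ≤ C) (hf : Integrable f μ) (θ : Fin m → ℝ) :
    ∫ x, f x * Real.log (expFam ψ θ x) ∂μ = ∑ i, θ i * ∫ x, f x * ψ i x ∂μ := by
  have hfψ (i : Fin m) : Integrable (fun x => θ i * (f x * ψ i x)) μ := by
    obtain ⟨C, hC⟩ := hψbdd i
    exact (hf.mul_bdd (hψmeas i).aestronglyMeasurable (ae_of_all _ hC)).const_mul _
  have hpt (x : ℝ) : f x * Real.log (expFam ψ θ x) = ∑ i, θ i * (f x * ψ i x) := by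
    rw [log_apply, Finset.mul_sum]
    exact Finset.sum_congr rfl fun i _ => by ring
  simp_rw [hpt]
  rw [integral_finsetSum _ fun i _ => hfψ i]
  simp_rw [integral_const_mul]

theorem integral_mul_log_div_sub_add [IsFiniteMeasure μ] {f : ℝ → ℝ}
    (hψmeas : ∀ i, Measurable (ψ i)) (hψbdd : ∀ i, ∃ C, ∀ x, |ψ i x| ≤ C) (hf : Integrable f μ)
    (hflogf : Integrable (fun x => f x * Real.log (f x)) μ) (θ : Fin m → ℝ) :
    ∫ x, (f x * Real.log (f x / expFam ψ θ x) - f x + expFam ψ θ x) ∂μ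
      = ∫ x, f x * Real.log (f x) ∂μ - ∑ i, θ i * ∫ x, f x * ψ i x ∂μ
        - ∫ x, f x ∂μ + ∫ x, expFam ψ θ x ∂μ := by
  have hpt (x : ℝ) : f x * Real.log (f x / expFam ψ θ x)
      = f x * Real.log (f x) - f x * Real.log (expFam ψ θ x) := by
    rcases eq_or_ne (f x) 0 with h | h
    · simp [h]
    · rw [Real.log_div h (pos θ x).ne', mul_sub]
  have hlog := integrable_mul_log hψmeas hψbdd hf θ
  have h₁ : Integrable (fun x => f x * Real.log (f x) - f x * Real.log (expFam ψ θ x)) μ :=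
    hflogf.sub hlog
  have h₂ : Integrable
      (fun x => f x * Real.log (f x) - f x * Real.log (expFam ψ θ x) - f x) μ := h₁.sub hf
  simp_rw [hpt]
  rw [integral_add h₂ (integrable hψmeas hψbdd θ), integral_sub h₁ hf, integral_sub hflogf hlog,
    integral_mul_log hψmeas hψbdd hf θ]

end expFam

theorem stmt_3_general {m : ℕ} (ψ : Fin m → ℝ → ℝ)
    (hψmeas : ∀ i, Measurable (ψ i)) (hψbdd : ∀ i, ∃ C, ∀ x, |ψ i x| ≤ C)
    (β : Fin m → ℝ) (θβ : Fin m → ℝ)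
    (hθβ : ∀ i, ∫ x in Set.Icc (0:ℝ) 1, expFam ψ θβ x * ψ i x = β i)
    (f : ℝ → ℝ)
    (hfint : IntegrableOn f (Set.Icc (0:ℝ) 1))
    (hflogf : IntegrableOn (fun x => f x * Real.log (f x)) (Set.Icc (0:ℝ) 1))
    (hfβ : ∀ i, ∫ x in Set.Icc (0:ℝ) 1, f x * ψ i x = β i)
    (θ : Fin m → ℝ) :
    KLdiv f (expFam ψ θ) = KLdiv f (expFam ψ θβ) + KLdiv (expFam ψ θβ) (expFam ψ θ) := by
  have hg : IntegrableOn (expFam ψ θβ) (Set.Icc (0:ℝ) 1) := expFam.integrable hψmeas hψbdd θβ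
  have hglogg : ∫ x in Set.Icc (0:ℝ) 1, expFam ψ θβ x * Real.log (expFam ψ θβ x)
      = ∑ i, θβ i * β i := by
    simp only [expFam.integral_mul_log hψmeas hψbdd hg, hθβ]
  unfold KLdiv
  rw [expFam.integral_mul_log_div_sub_add hψmeas hψbdd hfint hflogf,
    expFam.integral_mul_log_div_sub_add hψmeas hψbdd hfint hflogf,
    expFam.integral_mul_log_div_sub_add hψmeas hψbdd hg
      (expFam.integrable_mul_log hψmeas hψbdd hg θβ),
    hglogg]
  simp only [hfβ, hθβ]
  ring

/-- Pythagorean-like identity for the information projection onto an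
exponential family. -/
theorem stmt_3 {m : ℕ} (ψ : Fin m → ℝ → ℝ)
    (hψmeas : ∀ i, Measurable (ψ i)) (hψbdd : ∀ i, ∃ C, ∀ x, |ψ i x| ≤ C)
    (β : Fin m → ℝ) (θβ : Fin m → ℝ)
    (hθβ : ∀ i, ∫ x in Set.Icc (0:ℝ) 1, expFam ψ θβ x * ψ i x = β i)
    (f : ℝ → ℝ) (hfmeas : Measurable f) (hfnn : ∀ x, 0 ≤ f x)
    (hfint : IntegrableOn f (Set.Icc (0:ℝ) 1))
    (hflogf : IntegrableOn (fun x => f x * Real.log (f x)) (Set.Icc (0:ℝ) 1))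
    (hfβ : ∀ i, ∫ x in Set.Icc (0:ℝ) 1, f x * ψ i x = β i)
    (θ : Fin m → ℝ) :
    KLdiv f (expFam ψ θ) = KLdiv f (expFam ψ θβ) + KLdiv (expFam ψ θβ) (expFam ψ θ) :=
  stmt_3_general ψ hψmeas hψbdd β θβ hθβ f hfint hflogf hfβ θ
end

section
/- Let ψ₁,…,ψ_m be bounded measurable functions on [0,1] that are orthonormal in L²([0,1]), and let A < ∞ be a constant such that ‖v‖_∞ ≤ A‖v‖_{L²} for every v in the linear span of ψ₁,…,ψ_m. Let θ₀ ∈ ℝ^m, let β₀ ∈ ℝ^m be defined by β₀,ᵢ = ∫₀¹ f_{θ₀} ψ_i dμ, set b = exp(‖Σᵢ θ₀,ᵢ ψ_i‖_∞) and e = exp(1), and let β̃ ∈ ℝ^m be a vector with ‖β̃ − β₀‖₂ ≤ 1/(2ebA). Then there exists θ(β̃) ∈ ℝ^m with ∫₀¹ f_{θ(β̃)} ψ_i dμ = β̃_i for all i = 1,…,m, and it satisfies: (i) ‖θ(β̃) − θ₀‖₂ ≤ 2eb‖β̃ − β₀‖₂; (ii) ‖log(f_{θ₀}/f_{θ(β̃)})‖_∞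 ≤ 2ebA‖β̃ − β₀‖₂; (iii) Δ(f_{θ₀}; f_{θ(β̃)}) ≤ 2eb‖β̃ − β₀‖₂². -/
open MeasureTheory

/-- Supremum norm of a function over `[0,1]`. -/
noncomputable def supIcc (h : ℝ → ℝ) : ℝ := ⨆ x : Set.Icc (0:ℝ) 1, |h x|

/-- Euclidean norm on `ℝ^m`. -/
noncomputable def euclNorm {m : ℕ} (v : Fin m → ℝ) : ℝ := Real.sqrt (∑ i, v i ^ 2)


/-!
The moment vector `β̃` is attained by minimising the convex objective `∫ f_θ - ⟨β̃, θ⟩` over the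
ball `A ‖θ - θ₀‖ ≤ 1`. On that ball `w = ∑ (θ - θ₀)ᵢ ψᵢ` satisfies `|w| ≤ 1`, so
`(f_θ - f_θ₀) w = f_θ₀ (eʷ - 1) w ≥ w² / (e b)`; integrating and using orthonormality gives the
strong monotonicity `⟨θ - θ₀, β(θ) - β₀⟩ ≥ ‖θ - θ₀‖² / (e b)` of the moment map. Together with the
first-order condition at the minimiser (in the direction of `θ₀`) and Cauchy–Schwarz, this puts
the minimiser within `e b ‖β̃ - β₀‖ ≤ 1 / (2A)` of `θ₀`, inside the ball, where the gradient
`β(θ) - β̃` of the objective vanishes. Then (ii) is the sup-norm/L² comparison applied to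
`log (f_θ₀ / f_θ) = ∑ (θ₀ - θ)ᵢ ψᵢ`, and (iii) follows from
`Δ(f; g) ≤ ∫ (f - g) log (f / g) = ⟨θ₀ - θ, β₀ - β̃⟩`.
-/

open Real Set

namespace Real

theorem sq_mul_exp_neg_abs_le (w : ℝ) : w ^ 2 * exp (-|w|) ≤ (exp w - 1) * w := by
  rcases le_or_gt 0 w with hw | hw
  · rw [abs_of_nonneg hw]
    nlinarith [add_one_le_exp w, exp_le_one_iff.2 (neg_nonpos.2 hw), exp_pos (-w)]
  · rw [abs_of_neg hw, neg_neg]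
    have h : (1 - w) * exp w ≤ 1 := by
      have := mul_le_mul_of_nonneg_right (add_one_le_exp (-w)) (exp_pos w).le
      rwa [← exp_add, neg_add_cancel, exp_zero, neg_add_eq_sub] at this
    nlinarith [exp_pos w]

theorem sq_div_le_mul_exp_sub_one_mul {a b w : ℝ} (hb : 0 < b) (ha : b⁻¹ ≤ a) (hw : |w| ≤ 1) :
    w ^ 2 / (b * exp 1) ≤ a * (exp w - 1) * w := by
  have hexp : exp (-1) ≤ exp (-|w|) := exp_le_exp.2 (neg_le_neg hw)
  have hkey : 0 ≤ (exp w - 1) * w :=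
    (mul_nonneg (sq_nonneg w) (exp_pos _).le).trans (sq_mul_exp_neg_abs_le w)
  calc w ^ 2 / (b * exp 1) = b⁻¹ * (w ^ 2 * exp (-1)) := by
        rw [exp_neg]; field_simp
    _ ≤ b⁻¹ * ((exp w - 1) * w) := mul_le_mul_of_nonneg_left
        ((mul_le_mul_of_nonneg_left hexp (sq_nonneg w)).trans (sq_mul_exp_neg_abs_le w))
        (inv_nonneg.2 hb.le)
    _ ≤ a * ((exp w - 1) * w) := mul_le_mul_of_nonneg_right ha hkey
    _ = a * (exp w - 1) * w := by ring

theorem mul_log_div_sub_add_nonneg_s4 {a c : ℝ} (ha : 0 < a) (hc : 0 < c) :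
    0 ≤ a * log (a / c) - a + c := by
  have h := log_le_sub_one_of_pos (div_pos hc ha)
  rw [log_div hc.ne' ha.ne'] at h
  rw [log_div ha.ne' hc.ne']
  have : a * (c / a - 1) = c - a := by field_simp
  nlinarith

theorem mul_log_div_sub_add_le_s4 {a c : ℝ} (ha : 0 < a) (hc : 0 < c) :
    a * log (a / c) - a + c ≤ (a - c) * log (a / c) := by
  have h := mul_log_div_sub_add_nonneg_s4 hc ha
  rw [← inv_div, log_inv] at h
  linarith

end Real

section EuclNorm

variable {m : ℕ}

theorem euclNorm_eq_norm (v : Fin m → ℝ) : euclNorm v = ‖WithLp.toLp 2 v‖ := by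
  simp [euclNorm, EuclideanSpace.norm_eq]

theorem euclNorm_nonneg (v : Fin m → ℝ) : 0 ≤ euclNorm v := sqrt_nonneg _

theorem euclNorm_sub_comm (v w : Fin m → ℝ) : euclNorm (v - w) = euclNorm (w - v) := by
  simp only [euclNorm_eq_norm, WithLp.toLp_sub, norm_sub_rev]

theorem euclNorm_single (i : Fin m) : euclNorm (Pi.single i 1) = 1 := by
  simp [euclNorm, Pi.single_apply]

theorem sum_mul_le_euclNorm_mul (v w : Fin m → ℝ) :
    ∑ i, v i * w i ≤ euclNorm v * euclNorm w :=
  sum_mul_le_sqrt_mul_sqrt _ v w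

theorem dist_toLp_eq_euclNorm (v w : Fin m → ℝ) :
    dist (WithLp.toLp 2 v) (WithLp.toLp 2 w) = euclNorm (v - w) := by
  rw [dist_eq_norm, ← WithLp.toLp_sub, euclNorm_eq_norm]

end EuclNorm

theorem integral_sum_mul_sq_of_orthonormal {α ι : Type*} [MeasurableSpace α] [Fintype ι]
    [DecidableEq ι] {μ : Measure α} {ψ : ι → α → ℝ}
    (hint : ∀ i j, Integrable (fun x => ψ i x * ψ j x) μ)
    (horth : ∀ i j, ∫ x, ψ i x * ψ j x ∂μ = if i = j then 1 else 0) (c : ι → ℝ) :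
    ∫ x, (∑ i, c i * ψ i x) ^ 2 ∂μ = ∑ i, c i ^ 2 := by
  have hint' : ∀ i j, Integrable (fun x => c i * ψ i x * (c j * ψ j x)) μ := fun i j =>
    ((hint i j).const_mul (c i * c j)).congr (.of_forall fun x => by ring)
  simp_rw [sq, Finset.sum_mul_sum]
  rw [integral_finsetSum _ fun i _ => integrable_finsetSum _ fun j _ => hint' i j]
  refine Finset.sum_congr rfl fun i _ => ?_
  rw [integral_finsetSum _ fun j _ => hint' i j]
  simp_rw [show ∀ j x, c i * ψ i x * (c j * ψ j x) = c i * c j * (ψ i x * ψ j x) from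
    fun j x => by ring, integral_const_mul, horth]
  simp

theorem abs_le_supIcc {h : ℝ → ℝ} (hbdd : ∃ C, ∀ x, |h x| ≤ C) {x : ℝ}
    (hx : x ∈ Icc (0:ℝ) 1) : |h x| ≤ supIcc h := by
  obtain ⟨C, hC⟩ := hbdd
  exact le_ciSup (f := fun y : Icc (0:ℝ) 1 => |h y|) ⟨C, by rintro _ ⟨y, rfl⟩; exact hC y⟩ ⟨x, hx⟩

namespace ExpFam

variable {μ : Measure ℝ} {m : ℕ} {ψ : Fin m → ℝ → ℝ}

noncomputable def moment (μ : Measure ℝ) (ψ : Fin m → ℝ → ℝ) (θ : Fin m → ℝ) : Fin m → ℝ :=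
  fun i => ∫ x, expFam ψ θ x * ψ i x ∂μ

noncomputable def objective (μ : Measure ℝ) (ψ : Fin m → ℝ → ℝ) (β θ : Fin m → ℝ) : ℝ :=
  ∫ x, expFam ψ θ x ∂μ - ∑ i, β i * θ i

theorem expFam_pos (θ : Fin m → ℝ) (x : ℝ) : 0 < expFam ψ θ x := exp_pos _

theorem expFam_add_smul (θ c : Fin m → ℝ) (t x : ℝ) :
    expFam ψ (θ + t • c) x = expFam ψ θ x * exp (t * ∑ i, c i * ψ i x) := by
  simp only [expFam, ← exp_add, Finset.mul_sum, ← Finset.sum_add_distrib, Pi.add_apply,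
    Pi.smul_apply, smul_eq_mul]
  congr 1
  exact Finset.sum_congr rfl fun i _ => by ring

theorem log_expFam_div (θ θ' : Fin m → ℝ) (x : ℝ) :
    log (expFam ψ θ x / expFam ψ θ' x) = ∑ i, (θ - θ') i * ψ i x := by
  simp only [expFam, ← exp_sub, log_exp, ← Finset.sum_sub_distrib, Pi.sub_apply, sub_mul]

theorem measurable_sum_mul (hψ : ∀ i, Measurable (ψ i)) (c : Fin m → ℝ) :
    Measurable fun x => ∑ i, c i * ψ i x :=
  Finset.measurable_fun_sum _ fun i _ => (hψ i).const_mul (c i)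

theorem abs_sum_mul_le {C : Fin m → ℝ} (hC : ∀ i x, |ψ i x| ≤ C i) (c : Fin m → ℝ) (x : ℝ) :
    |∑ i, c i * ψ i x| ≤ ∑ i, |c i| * C i :=
  (Finset.abs_sum_le_sum_abs _ _).trans <| Finset.sum_le_sum fun i _ => by
    rw [abs_mul]; exact mul_le_mul_of_nonneg_left (hC i x) (abs_nonneg _)

theorem exists_abs_sum_mul_le (hψbdd : ∀ i, ∃ C, ∀ x, |ψ i x| ≤ C) (c : Fin m → ℝ) :
    ∃ M, ∀ x, |∑ i, c i * ψ i x| ≤ M := by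
  choose C hC using hψbdd
  exact ⟨_, abs_sum_mul_le hC c⟩

theorem exists_expFam_le (hψbdd : ∀ i, ∃ C, ∀ x, |ψ i x| ≤ C) (θ : Fin m → ℝ) :
    ∃ M, ∀ x, expFam ψ θ x ≤ M := by
  obtain ⟨M, hM⟩ := exists_abs_sum_mul_le hψbdd θ
  exact ⟨exp M, fun x => exp_le_exp.2 ((le_abs_self _).trans (hM x))⟩

theorem exp_neg_supIcc_le_expFam (hψbdd : ∀ i, ∃ C, ∀ x, |ψ i x| ≤ C) (θ : Fin m → ℝ) {x : ℝ}
    (hx : x ∈ Icc (0:ℝ) 1) : exp (-supIcc fun x => ∑ i, θ i * ψ i x) ≤ expFam ψ θ x :=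
  exp_le_exp.2 (abs_le.1 (abs_le_supIcc (exists_abs_sum_mul_le hψbdd θ) hx)).1

theorem pos_of_forall_ae_abs_sum_mul_le (i : Fin m)
    (horth : ∀ i j, ∫ x, ψ i x * ψ j x ∂μ = if i = j then 1 else 0) {A : ℝ}
    (hA : ∀ c : Fin m → ℝ, ∀ᵐ x ∂μ, |∑ i, c i * ψ i x| ≤ A * euclNorm c) : 0 < A := by
  by_contra! hA0
  have hzero : ∀ᵐ x ∂μ, ψ i x * ψ i x = 0 := (hA (Pi.single i 1)).mono fun x hx => by
    simp only [Pi.single_apply, ite_mul, one_mul, zero_mul, Finset.sum_ite_eq',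
      Finset.mem_univ, if_true, euclNorm_single, mul_one] at hx
    simp [abs_nonpos_iff.1 (hx.trans hA0)]
  simpa [integral_eq_zero_of_ae hzero] using horth i i

variable [IsFiniteMeasure μ]

theorem integrable_mul (hψ : ∀ i, Measurable (ψ i)) (hψbdd : ∀ i, ∃ C, ∀ x, |ψ i x| ≤ C)
    (i j : Fin m) : Integrable (fun x => ψ i x * ψ j x) μ := by
  obtain ⟨C, hC⟩ := hψbdd i
  obtain ⟨D, hD⟩ := hψbdd j
  exact (Integrable.of_bound (hψ i).aestronglyMeasurable C (.of_forall hC)).mul_bdd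
    (hψ j).aestronglyMeasurable (.of_forall hD)

theorem integrable_expFam (hψ : ∀ i, Measurable (ψ i)) (hψbdd : ∀ i, ∃ C, ∀ x, |ψ i x| ≤ C)
    (θ : Fin m → ℝ) : Integrable (expFam ψ θ) μ := by
  obtain ⟨M, hM⟩ := exists_expFam_le hψbdd θ
  exact .of_bound (measurable_sum_mul hψ θ).exp.aestronglyMeasurable M
    (.of_forall fun x => (Real.norm_of_nonneg (expFam_pos θ x).le).trans_le (hM x))

theorem integrable_expFam_mul (hψ : ∀ i, Measurable (ψ i))
    (hψbdd : ∀ i, ∃ C, ∀ x, |ψ i x| ≤ C) (θ : Fin m → ℝ) {g : ℝ → ℝ} (hg : Measurable g)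
    (hgbdd : ∃ M, ∀ x, |g x| ≤ M) : Integrable (fun x => expFam ψ θ x * g x) μ := by
  obtain ⟨M, hM⟩ := hgbdd
  exact (integrable_expFam hψ hψbdd θ).mul_bdd hg.aestronglyMeasurable (.of_forall hM)

theorem integrable_expFam_mul_sum (hψ : ∀ i, Measurable (ψ i))
    (hψbdd : ∀ i, ∃ C, ∀ x, |ψ i x| ≤ C) (θ c : Fin m → ℝ) :
    Integrable (fun x => expFam ψ θ x * ∑ i, c i * ψ i x) μ :=
  integrable_expFam_mul hψ hψbdd θ (measurable_sum_mul hψ c) (exists_abs_sum_mul_le hψbdd c)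

theorem integral_expFam_mul_sum (hψ : ∀ i, Measurable (ψ i))
    (hψbdd : ∀ i, ∃ C, ∀ x, |ψ i x| ≤ C) (θ c : Fin m → ℝ) :
    ∫ x, expFam ψ θ x * ∑ i, c i * ψ i x ∂μ = ∑ i, c i * moment μ ψ θ i := by
  simp_rw [Finset.mul_sum, moment, ← integral_const_mul]
  rw [integral_finsetSum _ fun i _ => ?_]
  · exact Finset.sum_congr rfl fun i _ => integral_congr_ae (.of_forall fun x => by ring)
  · exact ((integrable_expFam_mul hψ hψbdd θ (hψ i) (hψbdd i)).const_mul (c i)).congr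
      (.of_forall fun x => by ring)

theorem integral_expFam_sub_mul_sum (hψ : ∀ i, Measurable (ψ i))
    (hψbdd : ∀ i, ∃ C, ∀ x, |ψ i x| ≤ C) (θ θ' c : Fin m → ℝ) :
    ∫ x, (expFam ψ θ x - expFam ψ θ' x) * ∑ i, c i * ψ i x ∂μ
      = ∑ i, c i * (moment μ ψ θ i - moment μ ψ θ' i) := by
  simp_rw [sub_mul]
  rw [integral_sub (integrable_expFam_mul_sum hψ hψbdd θ c)
    (integrable_expFam_mul_sum hψ hψbdd θ' c), integral_expFam_mul_sum hψ hψbdd,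
    integral_expFam_mul_sum hψ hψbdd, ← Finset.sum_sub_distrib]
  simp_rw [mul_sub]

theorem continuous_integral_expFam (hψ : ∀ i, Measurable (ψ i))
    (hψbdd : ∀ i, ∃ C, ∀ x, |ψ i x| ≤ C) : Continuous fun θ => ∫ x, expFam ψ θ x ∂μ := by
  choose C hC using hψbdd
  refine continuous_iff_continuousAt.2 fun θ₀ => continuousAt_of_dominated
    (bound := fun _ => exp (∑ i, (|θ₀ i| + 1) * C i))
    (.of_forall fun θ => (measurable_sum_mul hψ θ).exp.aestronglyMeasurable) ?_
    (integrable_const _) (.of_forall fun x => (continuous_exp.comp (continuous_finsetSum _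
      fun i _ => (continuous_apply i).mul continuous_const)).continuousAt)
  filter_upwards [Metric.ball_mem_nhds θ₀ one_pos] with θ hθ
  refine .of_forall fun x => ?_
  rw [Real.norm_of_nonneg (expFam_pos θ x).le]
  refine exp_le_exp.2 <| (le_abs_self _).trans <| (abs_sum_mul_le hC θ x).trans <|
    Finset.sum_le_sum fun i _ => mul_le_mul_of_nonneg_right ?_ ((abs_nonneg _).trans (hC i x))
  have hdist : |θ i - θ₀ i| < 1 := (dist_le_pi_dist θ θ₀ i).trans_lt (Metric.mem_ball.1 hθ)
  linarith [abs_sub_abs_le_abs_sub (θ i) (θ₀ i)]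

theorem hasDerivAt_integral_expFam_line (hψ : ∀ i, Measurable (ψ i))
    (hψbdd : ∀ i, ∃ C, ∀ x, |ψ i x| ≤ C) (θ c : Fin m → ℝ) :
    HasDerivAt (fun t : ℝ => ∫ x, expFam ψ (θ + t • c) x ∂μ) (∑ i, c i * moment μ ψ θ i) 0 := by
  obtain ⟨Mf, hMf⟩ := exists_expFam_le hψbdd θ
  obtain ⟨Mw, hMw⟩ := exists_abs_sum_mul_le hψbdd c
  set w : ℝ → ℝ := fun x => ∑ i, c i * ψ i x
  have hw : Measurable w := measurable_sum_mul hψ c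
  have hf : Measurable (expFam ψ θ) := (measurable_sum_mul hψ θ).exp
  have hbound : ∀ x, ∀ t ∈ Metric.ball (0:ℝ) 1,
      ‖expFam ψ θ x * (exp (t * w x) * w x)‖ ≤ Mf * (exp Mw * Mw) := by
    intro x t ht
    rw [mem_ball_zero_iff, Real.norm_eq_abs] at ht
    have htw : t * w x ≤ Mw := (le_abs_self _).trans <| by
      rw [abs_mul]; nlinarith [abs_nonneg t, abs_nonneg (w x), hMw x]
    rw [norm_mul, norm_mul, Real.norm_of_nonneg (expFam_pos θ x).le,
      Real.norm_of_nonneg (exp_pos _).le, Real.norm_eq_abs]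
    exact mul_le_mul (hMf x) (mul_le_mul (exp_le_exp.2 htw) (hMw x) (abs_nonneg _)
      (exp_pos _).le) (by positivity) ((expFam_pos θ x).le.trans (hMf x))
  have key := hasDerivAt_integral_of_dominated_loc_of_deriv_le (μ := μ) (x₀ := 0)
    (F := fun t x => expFam ψ θ x * exp (t * w x))
    (F' := fun t x => expFam ψ θ x * (exp (t * w x) * w x)) (Metric.ball_mem_nhds 0 one_pos)
    (.of_forall fun t => (hf.mul (hw.const_mul t).exp).aestronglyMeasurable)
    (by simpa using integrable_expFam hψ hψbdd θ)
    (hf.mul ((hw.const_mul 0).exp.mul hw)).aestronglyMeasurable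
    (.of_forall hbound) (integrable_const _)
    (.of_forall fun x t _ => by
      simpa using (((hasDerivAt_id t).mul_const (w x)).exp).const_mul (expFam ψ θ x))
  simp only [zero_mul, exp_zero, one_mul] at key
  rw [← integral_expFam_mul_sum hψ hψbdd]
  simpa only [expFam_add_smul] using key.2

theorem continuous_objective (hψ : ∀ i, Measurable (ψ i))
    (hψbdd : ∀ i, ∃ C, ∀ x, |ψ i x| ≤ C) (β : Fin m → ℝ) : Continuous (objective μ ψ β) :=
  (continuous_integral_expFam hψ hψbdd).sub
    (continuous_finsetSum _ fun i _ => continuous_const.mul (continuous_apply i))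

theorem hasDerivAt_objective_line (hψ : ∀ i, Measurable (ψ i))
    (hψbdd : ∀ i, ∃ C, ∀ x, |ψ i x| ≤ C) (β θ c : Fin m → ℝ) :
    HasDerivAt (fun t : ℝ => objective μ ψ β (θ + t • c))
      (∑ i, c i * (moment μ ψ θ i - β i)) 0 := by
  have hlin : HasDerivAt (fun t : ℝ => ∑ i, β i * (θ + t • c) i) (∑ i, c i * β i) 0 :=
    HasDerivAt.fun_sum fun i _ => by
      simpa [mul_comm] using
        (((hasDerivAt_id (0:ℝ)).mul_const (c i)).const_add (θ i)).const_mul (β i)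
  rw [show ∑ i, c i * (moment μ ψ θ i - β i) = ∑ i, c i * moment μ ψ θ i - ∑ i, c i * β i by
    simp only [mul_sub, Finset.sum_sub_distrib]]
  exact (hasDerivAt_integral_expFam_line hψ hψbdd θ c).fun_sub hlin

theorem moment_eq_of_isLocalMin (hψ : ∀ i, Measurable (ψ i))
    (hψbdd : ∀ i, ∃ C, ∀ x, |ψ i x| ≤ C) {β θ : Fin m → ℝ}
    (h : IsLocalMin (objective μ ψ β) θ) : moment μ ψ θ = β := by
  funext i
  have hline : IsLocalMin (fun t : ℝ => objective μ ψ β (θ + t • Pi.single i 1)) 0 :=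
    IsLocalMin.comp_continuous (f := objective μ ψ β) (g := fun t : ℝ => θ + t • Pi.single i 1)
      (b := 0) (by simpa using h) (by fun_prop)
  simpa [Pi.single_apply, sub_eq_zero] using
    hline.hasDerivAt_eq_zero (hasDerivAt_objective_line hψ hψbdd β θ (Pi.single i 1))

theorem sum_mul_moment_sub_nonneg_of_isMinOn (hψ : ∀ i, Measurable (ψ i))
    (hψbdd : ∀ i, ∃ C, ∀ x, |ψ i x| ≤ C) {β θ θ' : Fin m → ℝ} {K : Set (Fin m → ℝ)}
    (hK : Convex ℝ K) (hmin : IsMinOn (objective μ ψ β) K θ) (hθ : θ ∈ K) (hθ' : θ' ∈ K) :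
    0 ≤ ∑ i, (θ' - θ) i * (moment μ ψ θ i - β i) := by
  have hseg : IsMinOn (fun t : ℝ => objective μ ψ β (θ + t • (θ' - θ))) (Icc 0 1) 0 :=
    fun t ht => by simpa using isMinOn_iff.1 hmin _ (hK.add_smul_sub_mem hθ hθ' ht)
  simpa using hseg.localize.hasFDerivWithinAt_nonneg
    (hasDerivAt_objective_line hψ hψbdd β θ (θ' - θ)).hasFDerivAt.hasFDerivWithinAt
    (sub_mem_posTangentConeAt_of_segment_subset (segment_eq_Icc zero_le_one).subset)

theorem sq_euclNorm_div_le_sum_mul_moment_sub (hψ : ∀ i, Measurable (ψ i))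
    (hψbdd : ∀ i, ∃ C, ∀ x, |ψ i x| ≤ C)
    (horth : ∀ i j, ∫ x, ψ i x * ψ j x ∂μ = if i = j then 1 else 0)
    {b : ℝ} (hb : 0 < b) {θ₀ θ : Fin m → ℝ} (hf₀ : ∀ᵐ x ∂μ, b⁻¹ ≤ expFam ψ θ₀ x)
    (hw : ∀ᵐ x ∂μ, |∑ i, (θ - θ₀) i * ψ i x| ≤ 1) :
    euclNorm (θ - θ₀) ^ 2 / (b * exp 1)
      ≤ ∑ i, (θ - θ₀) i * (moment μ ψ θ i - moment μ ψ θ₀ i) := by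
  rw [euclNorm, sq_sqrt (Finset.sum_nonneg fun i _ => sq_nonneg _),
    ← integral_sum_mul_sq_of_orthonormal (integrable_mul hψ hψbdd) horth, ← integral_div,
    ← integral_expFam_sub_mul_sum hψ hψbdd]
  refine integral_mono_of_nonneg (.of_forall fun x => by positivity) ?_ ?_
  · simp_rw [sub_mul]
    exact (integrable_expFam_mul_sum hψ hψbdd θ _).sub (integrable_expFam_mul_sum hψ hψbdd θ₀ _)
  filter_upwards [hf₀, hw] with x hx₀ hx
  have hθ : expFam ψ θ x = expFam ψ θ₀ x * exp (∑ i, (θ - θ₀) i * ψ i x) := by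
    simpa using expFam_add_smul (ψ := ψ) θ₀ (θ - θ₀) 1 x
  rw [hθ]
  linarith [sq_div_le_mul_exp_sub_one_mul hb hx₀ hx]

theorem euclNorm_sub_le_of_sum_mul_moment_sub_nonpos (hψ : ∀ i, Measurable (ψ i))
    (hψbdd : ∀ i, ∃ C, ∀ x, |ψ i x| ≤ C)
    (horth : ∀ i j, ∫ x, ψ i x * ψ j x ∂μ = if i = j then 1 else 0) {A : ℝ}
    (hA : ∀ c : Fin m → ℝ, ∀ᵐ x ∂μ, |∑ i, c i * ψ i x| ≤ A * euclNorm c)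
    {b : ℝ} (hb : 0 < b) {θ₀ : Fin m → ℝ} (hf₀ : ∀ᵐ x ∂μ, b⁻¹ ≤ expFam ψ θ₀ x)
    {β θ : Fin m → ℝ} (hθA : A * euclNorm (θ - θ₀) ≤ 1)
    (hθ : ∑ i, (θ - θ₀) i * (moment μ ψ θ i - β i) ≤ 0) :
    euclNorm (θ - θ₀) ≤ b * exp 1 * euclNorm (β - moment μ ψ θ₀) := by
  have hmono := sq_euclNorm_div_le_sum_mul_moment_sub hψ hψbdd horth hb hf₀
    ((hA (θ - θ₀)).mono fun x hx => hx.trans hθA)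
  have hCS := sum_mul_le_euclNorm_mul (θ - θ₀) (β - moment μ ψ θ₀)
  have hsplit : ∑ i, (θ - θ₀) i * (moment μ ψ θ i - moment μ ψ θ₀ i)
      = ∑ i, (θ - θ₀) i * (moment μ ψ θ i - β i) + ∑ i, (θ - θ₀) i * (β - moment μ ψ θ₀) i := by
    rw [← Finset.sum_add_distrib]
    exact Finset.sum_congr rfl fun i _ => by simp only [Pi.sub_apply]; ring
  have hbe : 0 < b * exp 1 := by positivity
  have h : euclNorm (θ - θ₀) ^ 2 / (b * exp 1)
      ≤ euclNorm (θ - θ₀) * euclNorm (β - moment μ ψ θ₀) := by linarith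
  rw [div_le_iff₀ hbe] at h
  rcases (euclNorm_nonneg (θ - θ₀)).eq_or_lt with h0 | hpos
  · rw [← h0]
    exact mul_nonneg hbe.le (euclNorm_nonneg _)
  · exact le_of_mul_le_mul_left (by linarith) hpos

theorem exists_moment_eq (hψ : ∀ i, Measurable (ψ i)) (hψbdd : ∀ i, ∃ C, ∀ x, |ψ i x| ≤ C)
    (horth : ∀ i j, ∫ x, ψ i x * ψ j x ∂μ = if i = j then 1 else 0) {A : ℝ}
    (hA : ∀ c : Fin m → ℝ, ∀ᵐ x ∂μ, |∑ i, c i * ψ i x| ≤ A * euclNorm c)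
    {b : ℝ} (hb : 0 < b) {θ₀ : Fin m → ℝ} (hf₀ : ∀ᵐ x ∂μ, b⁻¹ ≤ expFam ψ θ₀ x)
    {β : Fin m → ℝ} (hβ : euclNorm (β - moment μ ψ θ₀) ≤ 1 / (2 * exp 1 * b * A)) :
    ∃ θ, moment μ ψ θ = β ∧ euclNorm (θ - θ₀) ≤ b * exp 1 * euclNorm (β - moment μ ψ θ₀) := by
  obtain hm | ⟨⟨i⟩⟩ := isEmpty_or_nonempty (Fin m)
  · refine ⟨θ₀, Subsingleton.elim _ _, ?_⟩
    rw [sub_self, show euclNorm (0 : Fin m → ℝ) = 0 by simp [euclNorm]]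
    exact mul_nonneg (by positivity) (euclNorm_nonneg _)
  have hA0 := pos_of_forall_ae_abs_sum_mul_le i horth hA
  set K := WithLp.toLp 2 ⁻¹' Metric.closedBall (WithLp.toLp 2 θ₀) (1 / A)
  have hmemK : ∀ θ, θ ∈ K ↔ A * euclNorm (θ - θ₀) ≤ 1 := fun θ => by
    rw [mem_preimage, Metric.mem_closedBall, dist_toLp_eq_euclNorm, le_div_iff₀' hA0]
  have hθ₀K : θ₀ ∈ K := by simp [K, hA0.le]
  have hK : Convex ℝ K := (convex_closedBall _ _).linear_preimage
    (WithLp.linearEquiv 2 ℝ (Fin m → ℝ)).symm.toLinearMap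
  obtain ⟨θ, hθK, hmin⟩ := ((PiLp.homeomorph 2 _).symm.isCompact_preimage.2
    (isCompact_closedBall _ _)).exists_isMinOn ⟨θ₀, hθ₀K⟩
    (continuous_objective (μ := μ) hψ hψbdd β).continuousOn
  -- the first-order condition in the direction of `θ₀` keeps the minimiser away from the boundary
  have hnear : euclNorm (θ - θ₀) ≤ b * exp 1 * euclNorm (β - moment μ ψ θ₀) := by
    refine euclNorm_sub_le_of_sum_mul_moment_sub_nonpos hψ hψbdd horth hA hb hf₀
      ((hmemK θ).1 hθK) ?_
    rw [← neg_nonneg, ← Finset.sum_neg_distrib]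
    convert sum_mul_moment_sub_nonneg_of_isMinOn hψ hψbdd hK hmin hθK hθ₀K using 2 with j
    simp only [Pi.sub_apply]
    ring
  have hinterior : dist (WithLp.toLp 2 θ) (WithLp.toLp 2 θ₀) < 1 / A := by
    rw [dist_toLp_eq_euclNorm]
    calc euclNorm (θ - θ₀) ≤ b * exp 1 * (1 / (2 * exp 1 * b * A)) :=
          hnear.trans (mul_le_mul_of_nonneg_left hβ (by positivity))
      _ = 1 / (2 * A) := by field_simp
      _ < 1 / A := by gcongr; linarith
  refine ⟨θ, moment_eq_of_isLocalMin hψ hψbdd (hmin.isLocalMin ?_), hnear⟩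
  exact (PiLp.continuous_toLp 2 _).continuousAt.preimage_mem_nhds
    (Metric.closedBall_mem_nhds_of_mem hinterior)

theorem KLdiv_expFam_le (hψ : ∀ i, Measurable (ψ i)) (hψbdd : ∀ i, ∃ C, ∀ x, |ψ i x| ≤ C)
    (θ θ' : Fin m → ℝ) :
    KLdiv (expFam ψ θ) (expFam ψ θ') ≤ ∑ i, (θ - θ') i *
      (moment (volume.restrict (Icc 0 1)) ψ θ i - moment (volume.restrict (Icc 0 1)) ψ θ' i) := by
  rw [KLdiv, ← integral_expFam_sub_mul_sum hψ hψbdd]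
  refine integral_mono_of_nonneg (.of_forall fun x =>
    mul_log_div_sub_add_nonneg_s4 (expFam_pos θ x) (expFam_pos θ' x)) ?_ (.of_forall fun x => ?_)
  · simp_rw [sub_mul]
    exact (integrable_expFam_mul_sum hψ hψbdd θ _).sub (integrable_expFam_mul_sum hψ hψbdd θ' _)
  · simpa only [log_expFam_div] using
      mul_log_div_sub_add_le_s4 (expFam_pos (ψ := ψ) θ x) (expFam_pos (ψ := ψ) θ' x)

theorem supIcc_sum_mul_le (hψ : ∀ i, Measurable (ψ i)) (hψbdd : ∀ i, ∃ C, ∀ x, |ψ i x| ≤ C)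
    (horth : ∀ i j, (∫ x in Icc (0:ℝ) 1, ψ i x * ψ j x) = if i = j then 1 else 0) {A : ℝ}
    (hA : ∀ c : Fin m → ℝ, supIcc (fun x => ∑ i, c i * ψ i x)
      ≤ A * sqrt (∫ x in Icc (0:ℝ) 1, (∑ i, c i * ψ i x) ^ 2)) (c : Fin m → ℝ) :
    supIcc (fun x => ∑ i, c i * ψ i x) ≤ A * euclNorm c := by
  have h := hA c
  rwa [integral_sum_mul_sq_of_orthonormal (integrable_mul hψ hψbdd) horth] at h

end ExpFam

open ExpFam

/-- existence and stability of the information projection onto an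
exponential family (Barron–Sheu type lemma). -/
theorem stmt_4 {m : ℕ} (ψ : Fin m → ℝ → ℝ)
    (hψmeas : ∀ i, Measurable (ψ i)) (hψbdd : ∀ i, ∃ C, ∀ x, |ψ i x| ≤ C)
    (horth : ∀ i j, (∫ x in Set.Icc (0:ℝ) 1, ψ i x * ψ j x) = if i = j then 1 else 0)
    (A : ℝ)
    (hA : ∀ c : Fin m → ℝ, supIcc (fun x => ∑ i, c i * ψ i x)
      ≤ A * Real.sqrt (∫ x in Set.Icc (0:ℝ) 1, (∑ i, c i * ψ i x)^2))
    (θ₀ β₀ : Fin m → ℝ)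
    (hβ₀ : ∀ i, β₀ i = ∫ x in Set.Icc (0:ℝ) 1, expFam ψ θ₀ x * ψ i x)
    (b : ℝ) (hb : b = Real.exp (supIcc (fun x => ∑ i, θ₀ i * ψ i x)))
    (βt : Fin m → ℝ)
    (hβt : euclNorm (βt - β₀) ≤ 1 / (2 * Real.exp 1 * b * A)) :
    ∃ θβt : Fin m → ℝ,
      (∀ i, (∫ x in Set.Icc (0:ℝ) 1, expFam ψ θβt x * ψ i x) = βt i) ∧
      euclNorm (θβt - θ₀) ≤ 2 * Real.exp 1 * b * euclNorm (βt - β₀) ∧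
      supIcc (fun x => Real.log (expFam ψ θ₀ x / expFam ψ θβt x))
        ≤ 2 * Real.exp 1 * b * A * euclNorm (βt - β₀) ∧
      KLdiv (expFam ψ θ₀) (expFam ψ θβt) ≤ 2 * Real.exp 1 * b * (euclNorm (βt - β₀))^2 := by
  obtain rfl : β₀ = moment (volume.restrict (Icc 0 1)) ψ θ₀ := funext hβ₀
  have hb0 : 0 < b := hb ▸ exp_pos _
  have hA0 : 0 ≤ A := (mul_nonneg_iff_of_pos_left (by positivity)).1
    (one_div_nonneg.1 ((euclNorm_nonneg _).trans hβt))
  have hsup := supIcc_sum_mul_le hψmeas hψbdd horth hA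
  have hf₀ : ∀ᵐ x ∂(volume.restrict (Icc (0:ℝ) 1)), b⁻¹ ≤ expFam ψ θ₀ x :=
    ae_restrict_of_forall_mem measurableSet_Icc fun x hx => by
      rw [hb, ← exp_neg]; exact exp_neg_supIcc_le_expFam hψbdd θ₀ hx
  obtain ⟨θ, hθ, hθθ₀⟩ := exists_moment_eq hψmeas hψbdd horth
    (fun c => ae_restrict_of_forall_mem measurableSet_Icc fun x hx =>
      (abs_le_supIcc (exists_abs_sum_mul_le hψbdd c) hx).trans (hsup c)) hb0 hf₀ hβt
  set δ := euclNorm (βt - moment (volume.restrict (Icc 0 1)) ψ θ₀) with hδ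
  have hδ0 : 0 ≤ δ := euclNorm_nonneg _
  have hθθ₀' : euclNorm (θ - θ₀) ≤ 2 * exp 1 * b * δ :=
    hθθ₀.trans (by nlinarith [mul_nonneg (mul_nonneg hb0.le (exp_pos 1).le) hδ0])
  refine ⟨θ, congrFun hθ, hθθ₀', ?_, ?_⟩
  · simp_rw [log_expFam_div]
    calc supIcc (fun x => ∑ i, (θ₀ - θ) i * ψ i x) ≤ A * euclNorm (θ - θ₀) := by
          rw [euclNorm_sub_comm]; exact hsup _
      _ ≤ 2 * exp 1 * b * A * δ := by nlinarith
  · calc KLdiv (expFam ψ θ₀) (expFam ψ θ)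
        ≤ ∑ i, (θ₀ - θ) i * (moment _ ψ θ₀ - moment _ ψ θ) i := KLdiv_expFam_le hψmeas hψbdd θ₀ θ
      _ ≤ euclNorm (θ - θ₀) * δ := by
          rw [euclNorm_sub_comm θ, hθ, hδ, euclNorm_sub_comm βt]
          exact sum_mul_le_euclNorm_mul _ _
      _ ≤ 2 * exp 1 * b * δ ^ 2 := by nlinarith
end

section
/- Let ε = (ε₁,…,ε_n) be a random vector with independent standard Gaussian coordinates, let A be a nonzero real symmetric n×n matrix with eigenvalues s₁,…,s_n, and set Z = εᵀAε − tr(A). Then for every λ with 0 < λ < 1/(2 maxᵢ|sᵢ|), log E[e^{λZ}] ≤ λ² (Σᵢ₌₁ⁿ sᵢ²) / (1 − 2λ maxᵢ|sᵢ|). -/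
/-!
Rotating `ε` into an orthonormal eigenbasis of `A` (the standard Gaussian measure is invariant
under orthogonal maps) turns `Z` into `∑ sᵢ (ηᵢ² - 1)` with `ηᵢ` independent standard Gaussians,
so `log E[e^{λZ}] = ∑ (-λsᵢ - ½ log (1 - 2λsᵢ))`. Each term is bounded through the power series
`-log (1 - u) - u = ∑_{k ≥ 2} uᵏ / k ≤ u² / (2 (1 - |u|))`.
-/

open MeasureTheory ProbabilityTheory Matrix Real WithLp

theorem neg_log_one_sub_sub_le {u : ℝ} (hu : |u| < 1) :
    -log (1 - u) - u ≤ u ^ 2 / (2 * (1 - |u|)) := by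
  have hlog : HasSum (fun n : ℕ => u ^ (n + 2) / (n + 2)) (-log (1 - u) - u) := by
    have := (hasSum_nat_add_iff' 1).mpr (hasSum_pow_div_log_of_abs_lt_one hu)
    simpa [add_assoc, one_add_one_eq_two] using this
  have hgeom : HasSum (fun n : ℕ => u ^ 2 / 2 * |u| ^ n) (u ^ 2 / (2 * (1 - |u|))) := by
    have := (hasSum_geometric_of_lt_one (abs_nonneg u) hu).mul_left (u ^ 2 / 2)
    rwa [← div_eq_mul_inv, div_div] at this
  refine hasSum_le (fun n => ?_) hlog hgeom
  calc u ^ (n + 2) / (n + 2) ≤ |u| ^ (n + 2) / (n + 2) := by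
        rw [← abs_pow]; gcongr; exact le_abs_self _
    _ ≤ |u| ^ (n + 2) / 2 := by gcongr; linarith [n.cast_nonneg (α := ℝ)]
    _ = u ^ 2 / 2 * |u| ^ n := by rw [pow_add, ← sq_abs u]; ring

/- For `2 * a ≥ 1` both sides vanish: the integrand is not integrable and `√(1 - 2 * a) = 0`. -/
theorem integral_exp_mul_sq_sub_one_gaussianReal (a : ℝ) :
    ∫ t, exp (a * (t ^ 2 - 1)) ∂gaussianReal 0 1 = exp (-a) / √(1 - 2 * a) := by
  have hpdf : ∀ t, gaussianPDFReal 0 1 t • exp (a * (t ^ 2 - 1)) =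
      (√(2 * π))⁻¹ * exp (-a) * exp (-(1 / 2 - a) * t ^ 2) := by
    intro t
    simp only [gaussianPDFReal, NNReal.coe_one, mul_one, sub_zero, smul_eq_mul, mul_assoc,
      ← exp_add]
    ring_nf
  simp_rw [integral_gaussianReal_eq_integral_smul one_ne_zero, hpdf, integral_const_mul,
    integral_gaussian]
  rw [show π / (1 / 2 - a) = 2 * π / (1 - 2 * a) by field_simp, sqrt_div (by positivity)]
  field_simp

theorem integral_exp_mul_sq_sub_one_gaussianReal_pos {a : ℝ} (ha : 2 * a < 1) :
    0 < ∫ t, exp (a * (t ^ 2 - 1)) ∂gaussianReal 0 1 := by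
  rw [integral_exp_mul_sq_sub_one_gaussianReal]
  exact div_pos (exp_pos _) (sqrt_pos.mpr (by linarith))

theorem log_integral_exp_mul_sq_sub_one_gaussianReal_le {a : ℝ} (ha : 2 * |a| < 1) :
    log (∫ t, exp (a * (t ^ 2 - 1)) ∂gaussianReal 0 1) ≤ a ^ 2 / (1 - 2 * |a|) := by
  have h2a : 0 < 1 - 2 * a := by linarith [le_abs_self a]
  have key := neg_log_one_sub_sub_le (u := 2 * a) (by rwa [abs_mul, abs_two])
  rw [integral_exp_mul_sq_sub_one_gaussianReal, log_div (exp_pos _).ne' (sqrt_pos.mpr h2a).ne',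
    log_exp, log_sqrt h2a.le]
  rw [abs_mul, abs_two] at key
  calc -a - log (1 - 2 * a) / 2 = (-log (1 - 2 * a) - 2 * a) / 2 := by ring
    _ ≤ (2 * a) ^ 2 / (2 * (1 - 2 * |a|)) / 2 := by gcongr
    _ = a ^ 2 / (1 - 2 * |a|) := by field_simp

theorem map_pi_gaussianReal_orthonormalBasis {ι : Type*} [Fintype ι]
    (b : OrthonormalBasis ι ℝ (EuclideanSpace ℝ ι)) :
    (Measure.pi fun _ : ι => gaussianReal 0 1).map (fun η => ofLp (∑ i, η i • b i)) =
      Measure.pi fun _ : ι => gaussianReal 0 1 := by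
  have h := stdGaussian_eq_map_pi_orthonormalBasis b
  rw [← map_pi_eq_stdGaussian] at h
  calc _ = ((Measure.pi fun _ : ι => gaussianReal 0 1).map (fun η => ∑ i, η i • b i)).map ofLp := by
        rw [Measure.map_map (by fun_prop) (by fun_prop)]; rfl
    _ = _ := by
        rw [← h, Measure.map_map (by fun_prop) (by fun_prop)]
        exact Measure.map_id

theorem integral_pi_gaussianReal_comp_orthonormalBasis {ι : Type*} [Fintype ι]
    (b : OrthonormalBasis ι ℝ (EuclideanSpace ℝ ι)) {f : (ι → ℝ) → ℝ}
    (hf : AEStronglyMeasurable f (Measure.pi fun _ : ι => gaussianReal 0 1)) :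
    ∫ ω, f ω ∂(Measure.pi fun _ : ι => gaussianReal 0 1) =
      ∫ η, f (ofLp (∑ i, η i • b i)) ∂(Measure.pi fun _ : ι => gaussianReal 0 1) := by
  conv_lhs => rw [← map_pi_gaussianReal_orthonormalBasis b]
  rw [integral_map (Measurable.aemeasurable (by fun_prop))
    (by rwa [map_pi_gaussianReal_orthonormalBasis b])]

namespace Matrix.IsHermitian

variable {n : Type*} [Fintype n] [DecidableEq n] {A : Matrix n n ℝ}

theorem dotProduct_mulVec_sum_smul_eigenvectorBasis (hA : A.IsHermitian) (η : n → ℝ) :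
    ofLp (∑ i, η i • hA.eigenvectorBasis i) ⬝ᵥ A *ᵥ ofLp (∑ i, η i • hA.eigenvectorBasis i) =
      ∑ i, hA.eigenvalues i * η i ^ 2 := by
  have hAx : A *ᵥ ofLp (∑ i, η i • hA.eigenvectorBasis i) =
      ofLp (∑ i, (hA.eigenvalues i * η i) • hA.eigenvectorBasis i) := by
    simp only [ofLp_sum, ofLp_smul, mulVec_sum, mulVec_smul, hA.mulVec_eigenvectorBasis, smul_smul,
      mul_comm]
  calc _ = inner ℝ (∑ i, η i • hA.eigenvectorBasis i)
        (∑ i, (hA.eigenvalues i * η i) • hA.eigenvectorBasis i) := by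
        rw [hAx, EuclideanSpace.inner_eq_star_dotProduct, star_trivial, dotProduct_comm]
    _ = ∑ i, hA.eigenvalues i * η i ^ 2 := by
        rw [hA.eigenvectorBasis.orthonormal.inner_sum]
        exact Finset.sum_congr rfl fun i _ => by simp only [conj_trivial]; ring

theorem integral_exp_mul_dotProduct_mulVec_sub_trace (hA : A.IsHermitian) (lam : ℝ) :
    ∫ ω, Real.exp (lam * (ω ⬝ᵥ A *ᵥ ω - A.trace)) ∂(Measure.pi fun _ : n => gaussianReal 0 1) =
      ∏ i, ∫ t, Real.exp (lam * hA.eigenvalues i * (t ^ 2 - 1)) ∂gaussianReal 0 1 := by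
  have hcont : Continuous fun ω : n → ℝ => Real.exp (lam * (ω ⬝ᵥ A *ᵥ ω - A.trace)) := by
    fun_prop
  rw [integral_pi_gaussianReal_comp_orthonormalBasis hA.eigenvectorBasis
    hcont.aestronglyMeasurable, ← integral_fintype_prod_eq_prod]
  simp_rw [hA.dotProduct_mulVec_sum_smul_eigenvectorBasis, hA.trace_eq_sum_eigenvalues,
    RCLike.ofReal_real_eq_id, id, ← Finset.sum_sub_distrib, Finset.mul_sum, exp_sum,
    ← mul_sub_one, mul_assoc]

end Matrix.IsHermitian

theorem stmt_6_general (n : ℕ) (A : Matrix (Fin n) (Fin n) ℝ) (hA : A.IsHermitian)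
    (lam : ℝ) (hlam : 0 < lam)
    (hlam' : 2 * lam * (⨆ i, |hA.eigenvalues i|) < 1) :
    Real.log (∫ ω : Fin n → ℝ, Real.exp (lam * (ω ⬝ᵥ A.mulVec ω - A.trace))
        ∂(Measure.pi fun _ : Fin n => gaussianReal 0 1)) ≤
      lam ^ 2 * (∑ i, hA.eigenvalues i ^ 2) / (1 - 2 * lam * (⨆ i, |hA.eigenvalues i|)) := by
  set s := hA.eigenvalues
  set M := ⨆ i, |s i|
  have hsM : ∀ i, |lam * s i| ≤ lam * M := fun i => by
    rw [abs_mul, abs_of_pos hlam]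
    exact mul_le_mul_of_nonneg_left (le_ciSup (Set.finite_range fun i => |s i|).bddAbove i) hlam.le
  have hpos : ∀ i, 0 < ∫ t, exp (lam * s i * (t ^ 2 - 1)) ∂gaussianReal 0 1 := fun i =>
    integral_exp_mul_sq_sub_one_gaussianReal_pos (by linarith [le_abs_self (lam * s i), hsM i])
  rw [hA.integral_exp_mul_dotProduct_mulVec_sub_trace, log_prod fun i _ => (hpos i).ne']
  calc ∑ i, log (∫ t, exp (lam * s i * (t ^ 2 - 1)) ∂gaussianReal 0 1)
      ≤ ∑ i, (lam * s i) ^ 2 / (1 - 2 * |lam * s i|) := Finset.sum_le_sum fun i _ =>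
        log_integral_exp_mul_sq_sub_one_gaussianReal_le (by linarith [hsM i])
    _ ≤ ∑ i, (lam * s i) ^ 2 / (1 - 2 * lam * M) := Finset.sum_le_sum fun i _ =>
        div_le_div_of_nonneg_left (sq_nonneg _) (by linarith) (by linarith [hsM i])
    _ = lam ^ 2 * (∑ i, s i ^ 2) / (1 - 2 * lam * M) := by
        rw [← Finset.sum_div, Finset.mul_sum]; simp_rw [mul_pow]

/-- bound on the log-Laplace transform of a Gaussian quadratic form.
For `ε` a vector of independent standard Gaussians, `A ≠ 0` real symmetric with
eigenvalues `sᵢ`, `Z = εᵀAε − tr A`, and `0 < λ < 1/(2 maxᵢ |sᵢ|)`,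
`log E[e^{λZ}] ≤ λ² (Σᵢ sᵢ²) / (1 − 2λ maxᵢ |sᵢ|)`. -/
theorem stmt_6 (n : ℕ) (A : Matrix (Fin n) (Fin n) ℝ) (hA : A.IsHermitian) (hA0 : A ≠ 0)
    (lam : ℝ) (hlam : 0 < lam)
    (hlam' : 2 * lam * (⨆ i, |hA.eigenvalues i|) < 1) :
    Real.log (∫ ω : Fin n → ℝ, Real.exp (lam * (ω ⬝ᵥ A.mulVec ω - A.trace))
        ∂(Measure.pi fun _ : Fin n => gaussianReal 0 1)) ≤
      lam ^ 2 * (∑ i, hA.eigenvalues i ^ 2) / (1 - 2 * lam * (⨆ i, |hA.eigenvalues i|)) :=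
  stmt_6_general n A hA lam hlam hlam'
end

section
/- Let Z be a real-valued random variable, and let v ≥ 0 and c > 0 be constants such that log E[e^{λZ}] ≤ vλ²/(1 − 2cλ) for all λ with 0 < λ < 1/(2c). Then for every x > 0, P( Z > 2cx + 2√(vx) ) ≤ e^{−x}. -/
/-!
Chernoff's bound turns the hypothesis into `P(Z > t) ≤ exp(vλ²/(1 - 2cλ) - λt)` for every
`0 < λ < 1/(2c)`. For `t = 2cx + 2√(vx)` and `v > 0` the choice `λ = √x / (√v + 2c√x)` makes the
exponent exactly `-x`. For `v = 0` the exponent is `-2cxλ`, whose infimum `-x` is only approached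
as `λ → 1/(2c)`, so the bound follows by letting `λ` tend to the endpoint.
-/

open MeasureTheory Set Filter Topology Real

lemma measure_lt_le_ofReal_exp_sub {Ω : Type*} [MeasurableSpace Ω] {μ : Measure Ω}
    {Z : Ω → ℝ} (hZ : Measurable Z) {lam A : ℝ} (hlam : 0 < lam) (t : ℝ)
    (hmgf : ∫⁻ ω, ENNReal.ofReal (exp (lam * Z ω)) ∂μ ≤ ENNReal.ofReal (exp A)) :
    μ {ω | t < Z ω} ≤ ENNReal.ofReal (exp (A - lam * t)) := by
  have hmeas : AEMeasurable (fun ω => ENNReal.ofReal (exp (lam * Z ω))) μ :=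
    (measurable_const.mul hZ).exp.ennreal_ofReal.aemeasurable
  calc μ {ω | t < Z ω}
      ≤ μ {ω | ENNReal.ofReal (exp (lam * t)) ≤ ENNReal.ofReal (exp (lam * Z ω))} :=
        measure_mono fun ω (hω : t < Z ω) =>
          ENNReal.ofReal_le_ofReal (exp_le_exp.2 (mul_le_mul_of_nonneg_left hω.le hlam.le))
    _ ≤ (∫⁻ ω, ENNReal.ofReal (exp (lam * Z ω)) ∂μ) / ENNReal.ofReal (exp (lam * t)) :=
        meas_ge_le_lintegral_div hmeas (ENNReal.ofReal_pos.2 (exp_pos _)).ne' ENNReal.ofReal_ne_top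
    _ ≤ ENNReal.ofReal (exp A) / ENNReal.ofReal (exp (lam * t)) := by gcongr
    _ = ENNReal.ofReal (exp (A - lam * t)) := by
        rw [← ENNReal.ofReal_div_of_pos (exp_pos _), exp_sub]

lemma le_ofReal_exp_neg_of_forall_mem_Ioo {a : ENNReal} {x : ℝ} (hx : 0 < x)
    (h : ∀ y ∈ Ioo 0 x, a ≤ ENNReal.ofReal (exp (-y))) : a ≤ ENNReal.ofReal (exp (-x)) := by
  have hcont : Continuous fun y : ℝ => ENNReal.ofReal (exp (-y)) :=
    ENNReal.continuous_ofReal.comp (by fun_prop)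
  exact ge_of_tendsto (hcont.tendsto x |>.mono_left nhdsWithin_le_nhds)
    (eventually_of_mem (Ioo_mem_nhdsLT hx) h)

lemma exists_mem_Ioo_sq_div_sub_mul_eq_neg {v c x : ℝ} (hv : 0 < v) (hc : 0 < c) (hx : 0 < x) :
    ∃ lam ∈ Ioo 0 (1 / (2 * c)),
      v * lam ^ 2 / (1 - 2 * c * lam) - lam * (2 * c * x + 2 * √(v * x)) = -x := by
  obtain ⟨a, ha, rfl⟩ : ∃ a, 0 < a ∧ a ^ 2 = v := ⟨√v, sqrt_pos.2 hv, sq_sqrt hv.le⟩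
  obtain ⟨b, hb, rfl⟩ : ∃ b, 0 < b ∧ b ^ 2 = x := ⟨√x, sqrt_pos.2 hx, sq_sqrt hx.le⟩
  have hsqrt : √(a ^ 2 * b ^ 2) = a * b := by
    rw [← mul_pow, sqrt_sq (by positivity)]
  have hden : 0 < a + 2 * c * b := by positivity
  have hcompl : 1 - 2 * c * (b / (a + 2 * c * b)) = a / (a + 2 * c * b) := by
    field_simp
    ring
  refine ⟨b / (a + 2 * c * b), ⟨by positivity, ?_⟩, ?_⟩
  · rw [div_lt_div_iff₀ hden (by positivity)]
    linarith
  · rw [hcompl, hsqrt]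
    field_simp
    ring

theorem stmt_7_general {Ω : Type*} [MeasurableSpace Ω] (P : Measure Ω)
    (Z : Ω → ℝ) (hZ : Measurable Z) (v c : ℝ) (hv : 0 ≤ v) (hc : 0 < c)
    (hmgf : ∀ lam : ℝ, 0 < lam → lam < 1 / (2 * c) →
      (∫⁻ ω, ENNReal.ofReal (Real.exp (lam * Z ω)) ∂P)
        ≤ ENNReal.ofReal (Real.exp (v * lam ^ 2 / (1 - 2 * c * lam))))
    (x : ℝ) (hx : 0 < x) :
    P {ω | 2 * c * x + 2 * Real.sqrt (v * x) < Z ω} ≤ ENNReal.ofReal (Real.exp (-x)) := by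
  have chernoff : ∀ lam ∈ Ioo 0 (1 / (2 * c)),
      P {ω | 2 * c * x + 2 * √(v * x) < Z ω} ≤ ENNReal.ofReal
        (exp (v * lam ^ 2 / (1 - 2 * c * lam) - lam * (2 * c * x + 2 * √(v * x)))) :=
    fun lam hlam => measure_lt_le_ofReal_exp_sub hZ hlam.1 _ (hmgf lam hlam.1 hlam.2)
  rcases hv.eq_or_lt with rfl | hv
  · refine le_ofReal_exp_neg_of_forall_mem_Ioo hx fun y hy => ?_
    have hlam : y / (2 * c * x) ∈ Ioo 0 (1 / (2 * c)) := by
      refine ⟨div_pos hy.1 (by positivity), ?_⟩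
      rw [div_lt_div_iff₀ (by positivity) (by positivity)]
      nlinarith [hy.2]
    convert chernoff _ hlam using 3
    field_simp
    simp only [zero_mul, sqrt_zero]
    ring
  · obtain ⟨lam, hlam, hexp⟩ := exists_mem_Ioo_sq_div_sub_mul_eq_neg hv hc hx
    simpa only [hexp] using chernoff lam hlam

/-- Birgé–Massart type deviation inequality. If
`log E[e^{λZ}] ≤ vλ²/(1 − 2cλ)` for all `0 < λ < 1/(2c)` (stated equivalently as
`E[e^{λZ}] ≤ exp(vλ²/(1 − 2cλ))`, which in particular requires the exponential
moment to be finite), then `P(Z > 2cx + 2√(vx)) ≤ e^{−x}` for all `x > 0`. -/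
theorem stmt_7 {Ω : Type*} [MeasurableSpace Ω] (P : Measure Ω) [IsProbabilityMeasure P]
    (Z : Ω → ℝ) (hZ : Measurable Z) (v c : ℝ) (hv : 0 ≤ v) (hc : 0 < c)
    (hmgf : ∀ lam : ℝ, 0 < lam → lam < 1 / (2 * c) →
      (∫⁻ ω, ENNReal.ofReal (Real.exp (lam * Z ω)) ∂P)
        ≤ ENNReal.ofReal (Real.exp (v * lam ^ 2 / (1 - 2 * c * lam))))
    (x : ℝ) (hx : 0 < x) :
    P {ω | 2 * c * x + 2 * Real.sqrt (v * x) < Z ω} ≤ ENNReal.ofReal (Real.exp (-x)) :=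
  stmt_7_general P Z hZ v c hv hc hmgf x hx
end

section
/- Let g ∈ L²([0,1]) be real-valued. Then lim_{n→∞} (1/n) tr( T_n(g)² ) = ∫₀¹ g(ω)² dω. -/
/-!
Write `c k = ∫₀¹ e^{2πiωk} g(ω) dω`, so that `T_n(g)` has entries `c (t - t')` and, `g` being
real, `c (-k) = conj (c k)`. Hence `tr (T_n(g)²) = ∑_{t,t'} |c (t - t')|²`, and since the
difference `k` is attained by exactly `n - |k|` pairs,
`(1/n) tr (T_n(g)²) = ∑_k (1 - |k|/n)₊ |c k|²`. The weights increase to `1`, so by dominated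
convergence the limit is `∑_k |c k|²`, which is `∫₀¹ g²` by Parseval.
-/

open MeasureTheory Matrix Filter

/-- The `n×n` Toeplitz matrix of `g`, with entries
`[T_n(g)]_{t,t'} = ∫₀¹ e^{2πiω(t−t')} g(ω) dω`. -/
noncomputable def Toeplitz (n : ℕ) (g : ℝ → ℝ) : Matrix (Fin n) (Fin n) ℂ :=
  fun t t' => ∫ ω in Set.Icc (0:ℝ) 1,
    Complex.exp (2 * Real.pi * Complex.I * (ω : ℂ) * ((t.1 : ℂ) - (t'.1 : ℂ))) * (g ω : ℂ)

open Finset Topology ComplexConjugate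

theorem card_filter_fin_sub_eq (n : ℕ) (k : ℤ) :
    #{p : Fin n × Fin n | (p.1 : ℤ) - p.2 = k} = n - k.natAbs := by
  have hlen : n - k.natAbs = (min (n : ℤ) (n + k) - max 0 k).toNat := by
    rw [min_def, max_def]
    split_ifs <;> omega
  rw [hlen, ← Int.card_Ico]
  -- a pair with difference `k` is determined by its first entry, which ranges over this interval
  refine card_bij (fun p _ => (p.1 : ℤ)) ?_ ?_ ?_
  · intro p hp
    simp only [mem_filter, mem_univ, true_and] at hp
    simp only [mem_Ico]
    omega
  · intro p hp q hq hpq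
    simp only [mem_filter, mem_univ, true_and] at hp hq
    exact Prod.ext (Fin.ext (by omega)) (Fin.ext (by omega))
  · intro a ha
    simp only [mem_Ico] at ha
    exact ⟨(⟨a.toNat, by omega⟩, ⟨(a - k).toNat, by omega⟩), by simp; omega, by simp; omega⟩

theorem sum_fin_sub_eq {M : Type*} [AddCommMonoid M] (n : ℕ) (h : ℤ → M) :
    ∑ p : Fin n × Fin n, h (p.1 - p.2) = ∑ k ∈ Ioo (-(n : ℤ)) n, (n - k.natAbs) • h k := by
  rw [← sum_fiberwise_of_maps_to (g := fun p : Fin n × Fin n => (p.1 : ℤ) - p.2)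
    (t := Ioo (-(n : ℤ)) n) (fun p _ => by simp only [mem_Ioo]; omega)]
  refine sum_congr rfl fun k _ => ?_
  rw [← card_filter_fin_sub_eq, ← sum_const]
  exact sum_congr rfl fun p hp => by rw [(mem_filter.1 hp).2]

theorem tendsto_sub_natAbs_div (k : ℤ) :
    Tendsto (fun n : ℕ => ((n - k.natAbs : ℕ) : ℝ) / n) atTop (𝓝 1) := by
  have hlim : Tendsto (fun n : ℕ => 1 - (k.natAbs : ℝ) / n) atTop (𝓝 1) := by
    simpa using tendsto_const_nhds.sub (tendsto_const_div_atTop_nhds_zero_nat (k.natAbs : ℝ))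
  refine hlim.congr' ?_
  filter_upwards [eventually_gt_atTop k.natAbs] with n hn
  have hn0 : (n : ℝ) ≠ 0 := Nat.cast_ne_zero.2 (by omega)
  rw [Nat.cast_sub hn.le]
  field_simp

theorem sub_natAbs_div_mem_Icc (n : ℕ) (k : ℤ) :
    ((n - k.natAbs : ℕ) : ℝ) / n ∈ Set.Icc 0 1 :=
  ⟨by positivity, div_le_one_of_le₀ (by exact_mod_cast n.sub_le _) n.cast_nonneg⟩

theorem tendsto_tsum_sub_natAbs_div_mul {f : ℤ → ℝ} (hf : Summable f) :
    Tendsto (fun n : ℕ => ∑' k, ((n - k.natAbs : ℕ) : ℝ) / n * f k) atTop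
      (𝓝 (∑' k, f k)) := by
  refine tendsto_tsum_of_dominated_convergence hf.abs
    (fun k => by simpa using (tendsto_sub_natAbs_div k).mul_const (f k))
    (Eventually.of_forall fun n k => ?_)
  obtain ⟨h0, h1⟩ := sub_natAbs_div_mem_Icc n k
  rw [norm_mul, Real.norm_of_nonneg h0]
  exact mul_le_of_le_one_left (abs_nonneg _) h1

noncomputable def toeplitzCoeff (g : ℝ → ℝ) (k : ℤ) : ℂ :=
  ∫ ω in Set.Icc (0:ℝ) 1, Complex.exp (2 * Real.pi * Complex.I * ω * k) * g ω

theorem Toeplitz_apply (n : ℕ) (g : ℝ → ℝ) (t t' : Fin n) :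
    Toeplitz n g t t' = toeplitzCoeff g (t - t') := by
  simp only [Toeplitz, toeplitzCoeff]
  push_cast
  rfl

theorem toeplitzCoeff_neg (g : ℝ → ℝ) (k : ℤ) :
    toeplitzCoeff g (-k) = conj (toeplitzCoeff g k) := by
  rw [toeplitzCoeff, toeplitzCoeff, ← integral_conj]
  congr 1 with ω
  simp [← Complex.exp_conj, map_ofNat]

theorem trace_Toeplitz_mul_self (n : ℕ) (g : ℝ → ℝ) :
    (Toeplitz n g * Toeplitz n g).trace =
      ((∑ p : Fin n × Fin n, ‖toeplitzCoeff g (p.1 - p.2)‖ ^ 2 : ℝ) : ℂ) := by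
  rw [trace, Fintype.sum_prod_type]
  push_cast
  refine sum_congr rfl fun t _ => ?_
  rw [diag_apply, mul_apply]
  refine sum_congr rfl fun t' _ => ?_
  rw [Toeplitz_apply, Toeplitz_apply, ← neg_sub (t : ℤ), toeplitzCoeff_neg, Complex.mul_conj']

theorem one_div_mul_trace_Toeplitz_mul_self (n : ℕ) (g : ℝ → ℝ) :
    (1 / (n : ℂ)) * (Toeplitz n g * Toeplitz n g).trace =
      ((∑' k, ((n - k.natAbs : ℕ) : ℝ) / n * ‖toeplitzCoeff g k‖ ^ 2 : ℝ) : ℂ) := by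
  rw [trace_Toeplitz_mul_self, sum_fin_sub_eq n fun k => ‖toeplitzCoeff g k‖ ^ 2,
    tsum_eq_sum (s := Ioo (-(n : ℤ)) n)]
  · push_cast
    rw [mul_sum]
    refine sum_congr rfl fun k _ => ?_
    rw [nsmul_eq_mul]
    ring
  · intro k hk
    rw [mem_Ioo] at hk
    rw [Nat.sub_eq_zero_of_le (by omega), Nat.cast_zero, zero_div, zero_mul]

theorem toeplitzCoeff_eq_fourierCoeffOn (g : ℝ → ℝ) (k : ℤ) :
    toeplitzCoeff g k = fourierCoeffOn zero_lt_one (fun x => (g x : ℂ)) (-k) := by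
  rw [fourierCoeffOn_eq_integral, intervalIntegral.integral_of_le zero_le_one,
    ← integral_Icc_eq_integral_Ioc, toeplitzCoeff]
  simp [mul_comm, mul_left_comm]

theorem hasSum_sq_norm_toeplitzCoeff {g : ℝ → ℝ}
    (hg : MemLp g 2 (volume.restrict (Set.Icc (0:ℝ) 1))) :
    HasSum (fun k => ‖toeplitzCoeff g k‖ ^ 2) (∫ ω in Set.Icc (0:ℝ) 1, g ω ^ 2) := by
  have hL2 : MemLp (fun x => (g x : ℂ)) 2 (volume.restrict (Set.Ioc (0:ℝ) 1)) :=
    (hg.mono_measure (Measure.restrict_mono Set.Ioc_subset_Icc_self le_rfl)).ofReal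
  have hparseval := hasSum_sq_fourierCoeffOn zero_lt_one hL2
  rw [← (Equiv.neg ℤ).hasSum_iff] at hparseval
  simp only [Function.comp_def, Equiv.neg_apply] at hparseval
  convert hparseval using 1
  · funext k
    rw [toeplitzCoeff_eq_fourierCoeffOn]
  · rw [intervalIntegral.integral_of_le zero_le_one, ← integral_Icc_eq_integral_Ioc]
    simp

/-- for real-valued `g ∈ L²([0,1])`,
`lim_{n→∞} (1/n) tr(T_n(g)²) = ∫₀¹ g(ω)² dω`. -/
theorem stmt_13 (g : ℝ → ℝ)
    (hg : MemLp g 2 (volume.restrict (Set.Icc (0:ℝ) 1))) :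
    Tendsto (fun n : ℕ => (1 / (n : ℂ)) * (Toeplitz n g * Toeplitz n g).trace)
      atTop (nhds ((∫ ω in Set.Icc (0:ℝ) 1, (g ω)^2 : ℝ) : ℂ)) := by
  have hparseval := hasSum_sq_norm_toeplitzCoeff hg
  simp only [one_div_mul_trace_Toeplitz_mul_self, ← hparseval.tsum_eq]
  exact (tendsto_tsum_sub_natAbs_div_mul hparseval.summable).ofReal
end

section
/- For all real numbers b, b̂ and every ξ > 0, the following pointwise thresholding inequality holds: (b̂ − b)²·1{|b̂| > ξ} + b²·1{|b̂| ≤ ξ} ≤ (b̂ − b)²·1{|b| > ξ/2} + b²·1{|b| ≤ 2ξ} + 5·(b̂ − b)²·1{|b̂ − b| > ξ/2}. -/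
/-!
Write `d = |b̂ - b|`. If `|b̂| > ξ`, the left side is `d²`; either `|b| > ξ/2`, or the reverse
triangle inequality gives `d ≥ |b̂| - |b| > ξ/2`. If `|b̂| ≤ ξ`, the left side is `b²`; either
`|b| ≤ 2ξ`, or `d ≥ |b| - |b̂| > ξ`, whence `|b| ≤ |b̂| + d < 2d` and `b² ≤ 4d² ≤ 5d²`.
-/

theorem half_lt_abs_or_half_lt_abs_sub_of_lt_abs {b bh ξ : ℝ} (hbh : ξ < |bh|) :
    ξ / 2 < |b| ∨ ξ / 2 < |bh - b| := by
  by_contra! hle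
  linarith [abs_sub_abs_le_abs_sub bh b]

theorem lt_abs_sub_of_abs_le_of_two_mul_lt_abs {b bh ξ : ℝ} (hbh : |bh| ≤ ξ)
    (hb : 2 * ξ < |b|) : ξ < |bh - b| := by
  linarith [abs_sub_abs_le_abs_sub b bh, abs_sub_comm b bh]

theorem sq_le_four_mul_sq_sub_of_abs_le_of_two_mul_lt_abs {b bh ξ : ℝ} (hbh : |bh| ≤ ξ)
    (hb : 2 * ξ < |b|) : b ^ 2 ≤ 4 * (bh - b) ^ 2 := by
  have hd := lt_abs_sub_of_abs_le_of_two_mul_lt_abs hbh hb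
  have hb' : |b| ≤ |2 * (bh - b)| := by
    rw [abs_mul, abs_two]
    linarith [abs_sub_abs_le_abs_sub b bh, abs_sub_comm b bh]
  calc b ^ 2 ≤ (2 * (bh - b)) ^ 2 := sq_le_sq.mpr hb'
    _ = 4 * (bh - b) ^ 2 := by ring

theorem stmt_16_general (b bh ξ : ℝ) :
    (bh - b)^2 * (if ξ < |bh| then (1:ℝ) else 0)
      + b^2 * (if |bh| ≤ ξ then (1:ℝ) else 0)
    ≤ (bh - b)^2 * (if ξ / 2 < |b| then (1:ℝ) else 0)
      + b^2 * (if |b| ≤ 2 * ξ then (1:ℝ) else 0)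
      + 5 * ((bh - b)^2 * (if ξ / 2 < |bh - b| then (1:ℝ) else 0)) := by
  have hb2 := sq_nonneg b
  have hd2 := sq_nonneg (bh - b)
  rcases lt_or_ge ξ |bh| with hbh | hbh
  · rcases half_lt_abs_or_half_lt_abs_sub_of_lt_abs (b := b) hbh with hb | hd <;>
      split_ifs <;> linarith
  · rcases le_or_gt |b| (2 * ξ) with hb | hb
    · split_ifs <;> linarith
    · have hd := lt_abs_sub_of_abs_le_of_two_mul_lt_abs hbh hb
      have hb2d := sq_le_four_mul_sq_sub_of_abs_le_of_two_mul_lt_abs hbh hb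
      split_ifs <;> linarith [abs_nonneg bh]

/-- pointwise thresholding inequality. For all reals `b, b̂` and
`ξ > 0`:
`(b̂ − b)²·1{|b̂| > ξ} + b²·1{|b̂| ≤ ξ}
  ≤ (b̂ − b)²·1{|b| > ξ/2} + b²·1{|b| ≤ 2ξ} + 5(b̂ − b)²·1{|b̂ − b| > ξ/2}`. -/
theorem stmt_16 (b bh ξ : ℝ) (hξ : 0 < ξ) :
    (bh - b)^2 * (if ξ < |bh| then (1:ℝ) else 0)
      + b^2 * (if |bh| ≤ ξ then (1:ℝ) else 0)
    ≤ (bh - b)^2 * (if ξ / 2 < |b| then (1:ℝ) else 0)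
      + b^2 * (if |b| ≤ 2 * ξ then (1:ℝ) else 0)
      + 5 * ((bh - b)^2 * (if ξ / 2 < |bh - b| then (1:ℝ) else 0)) :=
  stmt_16_general b bh ξ
end
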